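/- Let χ be a Dirichlet character of conductor f, N ≥ 1, S_m = Σ_{a=1}^{f} χ(a) a^m, and Ŝ_m = f^{-N} Σ_{a=1}^{f} χ(a)·(N! f^m/(N+m)! - a^m/m!). Then for n ≥ 1, B_{N,n,χ} = (-1)^n · n! times the determinant of the n×n lower Hessenberg matrix whose (i,j) entry for i ≤ n-1 is N! f^{i-j+1}/(N+i-j+1)! when j ≤ i, 1 when j = i+1, 0 when j > i+1, and whose bottom row is (Ŝ_n, Ŝ_{n-1}, …, Ŝ_1). -/

import Mathlib

open PowerSeries Finset

noncomputable def eSer (c : ℂ) : PowerSeries ℂ := PowerSeries.mk fun n => c ^ n / n.factorial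

noncomputable def dSer (N f : ℕ) : PowerSeries ℂ :=
  PowerSeries.mk fun m => (N.factorial : ℂ) * (f : ℂ) ^ m / (N + m).factorial

noncomputable def hB (N n : ℕ) : ℂ :=
  n.factorial * PowerSeries.coeff n (dSer N 1)⁻¹

noncomputable def hBP (N n : ℕ) (x : ℂ) : ℂ :=
  n.factorial * PowerSeries.coeff n (eSer x * (dSer N 1)⁻¹)

noncomputable def gBP (N f : ℕ) (χ : DirichletCharacter ℂ f) (n : ℕ) (x : ℂ) : ℂ :=
  n.factorial * PowerSeries.coeff n
    (((f : ℂ) ^ N)⁻¹ • ((∑ a ∈ Finset.Icc 1 f, (PowerSeries.C (χ (a : ZMod f))) * eSer (x + a)) * (dSer N f)⁻¹))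

noncomputable def gB (N f : ℕ) (χ : DirichletCharacter ℂ f) (n : ℕ) : ℂ := gBP N f χ n 0

noncomputable def Shat (N f : ℕ) (χ : DirichletCharacter ℂ f) (m : ℕ) : ℂ :=
  ((f : ℂ) ^ N)⁻¹ * ∑ a ∈ Finset.Icc 1 f, χ (a : ZMod f) *
    ((N.factorial : ℂ) * (f : ℂ) ^ m / ((N + m).factorial : ℂ) - (a : ℂ) ^ m / (m.factorial : ℂ))


/-!
Let `D = Σ N! f^m t^m / (N+m)!` and `S = Σ_a χ(a) e^{at}`, so that `B_{N,n,χ} / n!` is the `n`-th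
coefficient of `f^{-N} S D⁻¹`. Since the `Ŝ_m` are the coefficients of `f^{-N} (S(0) D - S)`, for
`n ≥ 1` this coefficient equals minus the `n`-th coefficient of `Ŝ D⁻¹`.

The Hessenberg matrix `M` built from `D` and a series `b` with `b_0 = 0` sends the vector of the first
`n` coefficients of `D⁻¹` to the last unit vector times the `n`-th coefficient of `b D⁻¹`: its
first `n - 1` rows are the relations `D⁻¹ D = 1`. As the first of these coefficients is `1`, Cramer's
rule expresses `det M` as the determinant of `M` with its first column replaced by that vector,
which is `±` that coefficient because removing the last row and the first column of `M` leaves a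
unitriangular matrix.
-/

section LowerHessenberg

open Matrix

variable {R : Type*} [CommRing R]

def lowerHessenberg (d b : ℕ → R) (n : ℕ) : Matrix (Fin n) (Fin n) R :=
  Matrix.of fun i j =>
    if (i : ℕ) = n - 1 then b (n - j)
    else if (j : ℕ) = i + 1 then 1
    else if (j : ℕ) ≤ i then d (i - j + 1)
    else 0

theorem det_lowerHessenberg_updateCol_zero (d b : ℕ → R) (m : ℕ) (c : R) :
    ((lowerHessenberg d b (m + 1)).updateCol 0 (Pi.single (Fin.last m) c)).det = (-1) ^ m * c := by
  rw [det_succ_column_zero, Fintype.sum_eq_single (Fin.last m) fun i hi => by simp [hi],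
    Fin.succAbove_last]
  have hunitriangular : (((lowerHessenberg d b (m + 1)).updateCol 0 (Pi.single (Fin.last m) c)).submatrix
      Fin.castSucc Fin.succ).det = 1 := by
    rw [det_of_isLowerTriangular]
    · refine Finset.prod_eq_one fun i _ => ?_
      simp [lowerHessenberg, i.isLt.ne]
    · intro i j hij
      have hij : i < j := hij
      simp [lowerHessenberg, i.isLt.ne, Fin.val_ne_of_ne hij.ne', hij.not_gt]
  simp [hunitriangular]

theorem lowerHessenberg_mulVec_coeff {d b : ℕ → R} (hd : d 0 = 1) (hb : b 0 = 0) {E : R⟦X⟧}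
    (hE : E * mk d = 1) (m : ℕ) :
    lowerHessenberg d b (m + 1) *ᵥ (fun j => coeff j E) =
      Pi.single (Fin.last m) (coeff (m + 1) (E * mk b)) := by
  ext i
  simp only [mulVec, dotProduct, lowerHessenberg, of_apply]
  by_cases hi : i = Fin.last m
  · subst hi
    simp only [Fin.val_last, add_tsub_cancel_right, if_true, Pi.single_eq_same, coeff_mul,
      Nat.sum_antidiagonal_eq_sum_range_succ_mk, sum_range_succ _ (m + 1), coeff_mk, Nat.sub_self,
      hb, mul_zero, add_zero]
    rw [Fin.sum_univ_eq_sum_range (fun j => b (m + 1 - j) * coeff j E)]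
    exact sum_congr rfl fun j _ => mul_comm _ _
  · have hi' : (i : ℕ) < m := Fin.val_lt_last hi
    rw [Pi.single_eq_of_ne hi]
    have hrow : ∀ j : Fin (m + 1), (if (i : ℕ) = m + 1 - 1 then b (m + 1 - j)
        else if (j : ℕ) = i + 1 then 1 else if (j : ℕ) ≤ i then d (i - j + 1) else 0) * coeff j E
        = if (j : ℕ) < i + 2 then coeff j E * d (i + 1 - j) else 0 := by
      intro j
      rw [if_neg (by omega)]
      split_ifs with h₁ h₂ h₃ <;> try omega
      · simp [h₁, hd]
      · rw [show (i : ℕ) - j + 1 = i + 1 - j by omega, mul_comm]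
      · simp
    rw [Fintype.sum_congr _ _ hrow,
      Fin.sum_univ_eq_sum_range (fun j => if j < i + 2 then coeff j E * d (i + 1 - j) else 0),
      ← sum_filter, show (range (m + 1)).filter (· < (i : ℕ) + 2) = range (i + 2) by ext; simp; omega]
    simpa [coeff_mul, Nat.sum_antidiagonal_eq_sum_range_succ_mk] using congrArg (coeff (i + 1)) hE

theorem det_lowerHessenberg {d b : ℕ → R} (hd : d 0 = 1) (hb : b 0 = 0) {E : R⟦X⟧}
    (hE : E * mk d = 1) (m : ℕ) :
    (lowerHessenberg d b (m + 1)).det = (-1) ^ m * coeff (m + 1) (E * mk b) := by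
  have hE₀ : coeff 0 E = 1 := by simpa [hd] using congrArg (coeff 0) hE
  have hcramer := congrFun (cramer_eq_adjugate_mulVec (lowerHessenberg d b (m + 1))
    (lowerHessenberg d b (m + 1) *ᵥ fun j => coeff j E)) 0
  rw [mulVec_mulVec, adjugate_mul, smul_mulVec, one_mulVec, cramer_apply,
    lowerHessenberg_mulVec_coeff hd hb hE, det_lowerHessenberg_updateCol_zero] at hcramer
  simpa [hE₀] using hcramer.symm

end LowerHessenberg

theorem constantCoeff_dSer (N f : ℕ) : constantCoeff (dSer N f) = 1 := by
  simp [dSer, ← coeff_zero_eq_constantCoeff_apply, Nat.factorial_ne_zero]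

theorem Shat_zero (N f : ℕ) (χ : DirichletCharacter ℂ f) : Shat N f χ 0 = 0 := by
  simp [Shat, Nat.factorial_ne_zero]

theorem mk_Shat (N f : ℕ) (χ : DirichletCharacter ℂ f) :
    mk (Shat N f χ) = C ((f : ℂ) ^ N)⁻¹ *
      (C (∑ a ∈ Icc 1 f, χ a) * dSer N f - ∑ a ∈ Icc 1 f, C (χ a) * eSer a) := by
  ext k
  simp [Shat, dSer, eSer, map_sum, coeff_C_mul, mul_sub, sum_mul]

theorem stmt16_general (N f : ℕ) (χ : DirichletCharacter ℂ f) (n : ℕ) (hn : 1 ≤ n) :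
    gB N f χ n = (-1) ^ n * (n.factorial : ℂ) *
      Matrix.det (Matrix.of fun i j : Fin n =>
        if (i : ℕ) = n - 1 then Shat N f χ (n - (j : ℕ))
        else if (j : ℕ) = (i : ℕ) + 1 then 1
        else if (j : ℕ) ≤ (i : ℕ) then
          (N.factorial : ℂ) * (f : ℂ) ^ ((i : ℕ) - (j : ℕ) + 1) /
            ((N + ((i : ℕ) - (j : ℕ)) + 1).factorial : ℂ)
        else 0) := by
  obtain ⟨m, rfl⟩ : ∃ m, n = m + 1 := ⟨n - 1, by omega⟩
  change _ = _ * (lowerHessenberg (fun k => (N.factorial : ℂ) * (f : ℂ) ^ k / (N + k).factorial)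
    (Shat N f χ) (m + 1)).det
  set D := dSer N f
  set S := ∑ a ∈ Icc 1 f, C (χ (a : ZMod f)) * eSer a
  set t := ((f : ℂ) ^ N)⁻¹
  have hD : D⁻¹ * D = 1 := PowerSeries.inv_mul_cancel _ (by simp [D, constantCoeff_dSer])
  have hsplit : t • (S * D⁻¹) = C (t * ∑ a ∈ Icc 1 f, χ a) - D⁻¹ * mk (Shat N f χ) := by
    rw [mk_Shat, smul_eq_C_mul, map_mul]
    linear_combination (C t * C (∑ a ∈ Icc 1 f, χ a)) * hD
  have hgB : gB N f χ (m + 1) = -(m + 1).factorial * coeff (m + 1) (D⁻¹ * mk (Shat N f χ)) := by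
    simp only [gB, gBP, zero_add]
    rw [hsplit, map_sub, coeff_C, if_neg m.succ_ne_zero]
    ring
  have hsign : (-1 : ℂ) ^ m * (-1) ^ m = 1 := by rw [← mul_pow]; norm_num
  rw [hgB, det_lowerHessenberg (by simp [Nat.factorial_ne_zero]) (Shat_zero N f χ) hD]
  linear_combination ((m + 1).factorial * coeff (m + 1) (D⁻¹ * mk (Shat N f χ))) * hsign

theorem stmt16 (N f : ℕ) (hN : 1 ≤ N) (hf : 0 < f) (χ : DirichletCharacter ℂ f)
    (hχ : χ.IsPrimitive) (n : ℕ) (hn : 1 ≤ n) :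
    gB N f χ n = (-1) ^ n * (n.factorial : ℂ) *
      Matrix.det (Matrix.of fun i j : Fin n =>
        if (i : ℕ) = n - 1 then Shat N f χ (n - (j : ℕ))
        else if (j : ℕ) = (i : ℕ) + 1 then 1
        else if (j : ℕ) ≤ (i : ℕ) then
          (N.factorial : ℂ) * (f : ℂ) ^ ((i : ℕ) - (j : ℕ) + 1) /
            ((N + ((i : ℕ) - (j : ℕ)) + 1).factorial : ℂ)
        else 0) :=
  stmt16_general N f χ n hn
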